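/- For every closed λ-term M, the Φ-term ⟨M⟩ is canonical; moreover, if a closed Φ-term t is canonical and t rewrites in one step to u in Φ, then u is canonical. -/
import Mathlib


/-- Untyped λ-terms over variables drawn from ℕ (a denumerable totally ordered set). -/
inductive Lam : Type
  | var : ℕ → Lam
  | lam : ℕ → Lam → Lam
  | app : Lam → Lam → Lam
deriving DecidableEq, Repr

namespace Lam

/-- Capture-permitting substitution M{N/x} (adequate for weak reduction of closed terms). -/
def subst : Lam → ℕ → Lam → Lam
  | var y, x, N => if y = x then N else var y
  | lam y M, x, N => if y = x then lam y M else lam y (subst M x N)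
  | app M₁ M₂, x, N => app (subst M₁ x N) (subst M₂ x N)

/-- Simultaneous substitution along a partial assignment of terms to variables. -/
def msubst : Lam → (ℕ → Option Lam) → Lam
  | var y, σ => (σ y).getD (var y)
  | lam y M, σ => lam y (msubst M (fun z => if z = y then none else σ z))
  | app M₁ M₂, σ => app (msubst M₁ σ) (msubst M₂ σ)

/-- The assignment sending each `xᵢ` to `tᵢ` (first match wins). -/
def substOf (xs : List ℕ) (ts : List Lam) : ℕ → Option Lam :=
  fun y => (xs.zip ts).lookup y

/-- Values: variables and abstractions. -/
def IsValue : Lam → Prop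
  | var _ => True
  | lam _ _ => True
  | app _ _ => False

/-- Weak call-by-value reduction. -/
inductive CbvStep : Lam → Lam → Prop
  | beta {x : ℕ} {M V : Lam} : IsValue V → CbvStep (app (lam x M) V) (subst M x V)
  | appL {M N L : Lam} : CbvStep M N → CbvStep (app M L) (app N L)
  | appR {M N L : Lam} : CbvStep M N → CbvStep (app L M) (app L N)

/-- A →v-normal form. -/
def CbvNormal (M : Lam) : Prop := ¬ ∃ N, CbvStep M N

/-- Free variables, as a finite set. -/
def fv : Lam → Finset ℕ
  | var x => {x}
  | lam x M => fv M \ {x}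
  | app M N => fv M ∪ fv N

/-- The sequence (without repetitions, in variable order) of free variables of `M`. -/
def fvList (M : Lam) : List ℕ := (fv M).sort (· ≤ ·)

def Closed (M : Lam) : Prop := fv M = ∅

/-- The size |M| of a λ-term. -/
def size : Lam → ℕ
  | var _ => 1
  | lam _ M => size M + 1
  | app M N => size M + size N + 1

end Lam

/-- `NSteps r n a b`: `a` reduces to `b` in exactly `n` `r`-steps. -/
def NSteps {α : Type*} (r : α → α → Prop) : ℕ → α → α → Prop
  | 0 => fun a b => a = b
  | n + 1 => fun a c => ∃ b, r a b ∧ NSteps r n b c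

/-- Terms of the constructor rewrite system Φ: variables, the binary function symbol
`app`, and for every λ-term `M` and variable `x` a constructor `c_{x,M}` (here `con x M`),
whose arity is the length of `FV(λx.M)`. -/
inductive PTerm : Type
  | var : ℕ → PTerm
  | app : PTerm → PTerm → PTerm
  | con : ℕ → Lam → List PTerm → PTerm

namespace PTerm

/-- Well-formed Φ-terms: every constructor is applied to as many arguments as its arity. -/
inductive WF : PTerm → Prop
  | var {x} : WF (var x)
  | app {u v} : WF u → WF v → WF (app u v)
  | con {x M ts} : ts.length = (Lam.fvList (Lam.lam x M)).length →
      (∀ t ∈ ts, WF t) → WF (con x M ts)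

/-- Constructor terms: built only from constructors. -/
inductive IsConTerm : PTerm → Prop
  | con {x M ts} : (∀ t ∈ ts, IsConTerm t) → IsConTerm (con x M ts)

/-- Canonical closed Φ-terms. -/
inductive Canonical : PTerm → Prop
  | con {t} : IsConTerm t → Canonical t
  | app {u v} : Canonical u → Canonical v → Canonical (app u v)

/-- Closed Φ-terms contain no variables. -/
inductive ClosedP : PTerm → Prop
  | app {u v} : ClosedP u → ClosedP v → ClosedP (app u v)
  | con {x M ts} : (∀ t ∈ ts, ClosedP t) → ClosedP (con x M ts)

/-- Substitution of Φ-terms for variables. -/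
def psubst (σ : ℕ → Option PTerm) : PTerm → PTerm
  | var y => (σ y).getD (var y)
  | app u v => app (psubst σ u) (psubst σ v)
  | con x M ts => con x M (ts.attach.map (fun t => psubst σ t.1))
decreasing_by
  all_goals simp_wf
  all_goals try have := List.sizeOf_lt_of_mem t.2
  all_goals omega

/-- The assignment sending each `xᵢ` to `tᵢ`. -/
def substOfP (xs : List ℕ) (ts : List PTerm) : ℕ → Option PTerm :=
  fun y => (xs.zip ts).lookup y

/-- Variables occurring in a Φ-term. -/
def pvars : PTerm → List ℕ
  | var y => [y]
  | app u v => pvars u ++ pvars v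
  | con _ _ ts => ts.attach.flatMap (fun t => pvars t.1)
decreasing_by
  all_goals simp_wf
  all_goals try have := List.sizeOf_lt_of_mem t.2
  all_goals omega

end PTerm

/-- The translation ⟨·⟩ from λ-terms to Φ-terms. -/
def transPhi : Lam → PTerm
  | .var x => .var x
  | .lam x M => .con x M ((Lam.fvList (.lam x M)).map .var)
  | .app M N => .app (transPhi M) (transPhi N)

/-- The readback ⟦·⟧ from Φ-terms to λ-terms. -/
def readback : PTerm → Lam
  | .var x => .var x
  | .app u v => .app (readback u) (readback v)
  | .con x M ts =>
      Lam.msubst (.lam x M)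
        (Lam.substOf (Lam.fvList (.lam x M)) (ts.attach.map (fun t => readback t.1)))
decreasing_by
  all_goals simp_wf
  all_goals try have := List.sizeOf_lt_of_mem t.2
  all_goals omega

/-- One-step rewriting in Φ: the rule app(c_{x,M}(x₁,…,xₙ), x) → ⟨M⟩ (matched variables
instantiated by constructor terms), closed under arbitrary contexts. -/
inductive PhiStep : PTerm → PTerm → Prop
  | root {x : ℕ} {M : Lam} {ts : List PTerm} {v : PTerm} :
      (∀ t ∈ ts, PTerm.IsConTerm t) → PTerm.IsConTerm v →
      ts.length = (Lam.fvList (.lam x M)).length →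
      PhiStep (.app (.con x M ts) v)
        (PTerm.psubst (PTerm.substOfP (Lam.fvList (.lam x M) ++ [x]) (ts ++ [v])) (transPhi M))
  | appL {u u' v} : PhiStep u u' → PhiStep (.app u v) (.app u' v)
  | appR {u v v'} : PhiStep v v' → PhiStep (.app u v) (.app u v')
  | conArg {x M ts₁ t t' ts₂} : PhiStep t t' →
      PhiStep (.con x M (ts₁ ++ t :: ts₂)) (.con x M (ts₁ ++ t' :: ts₂))

/-- Φ-normal forms. -/
def PhiNormal (t : PTerm) : Prop := ¬ ∃ u, PhiStep t u

open PTerm in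
lemma isConTerm_no_step : ∀ {t u : PTerm}, PhiStep t u → IsConTerm t → False := by
  intro t u h
  induction h with
  | root _ _ _ => intro hc; cases hc
  | appL _ _ => intro hc; cases hc
  | appR _ _ => intro hc; cases hc
  | conArg _ ih =>
    intro hc
    cases hc with
    | con h => exact ih (h _ (by simp))

lemma lookup_zip {xs : List ℕ} {ts : List PTerm} (h : xs.length = ts.length)
    {y : ℕ} (hy : y ∈ xs) : ∃ t ∈ ts, (xs.zip ts).lookup y = some t := by
  induction xs generalizing ts with
  | nil => cases hy
  | cons x xs ih =>
    cases ts with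
    | nil => simp at h
    | cons t ts =>
      by_cases hxy : y = x
      · exact ⟨t, by simp, by simp [List.lookup, hxy]⟩
      · have hy' : y ∈ xs := by
          rcases List.mem_cons.1 hy with h' | h'
          · exact absurd h' hxy
          · exact h'
        rcases ih (by simpa using h) hy' with ⟨c, hc, hl⟩
        refine ⟨c, by simp [hc], ?_⟩
        have hb : (y == x) = false := by simp [hxy]
        simp only [List.zip_cons_cons, List.lookup_cons, hb]
        exact hl

open PTerm in
lemma psubst_canonical : ∀ (M : Lam) (σ : ℕ → Option PTerm),
    (∀ y ∈ Lam.fv M, ∃ c, σ y = some c ∧ IsConTerm c) →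
    Canonical (psubst σ (transPhi M)) := by
  intro M
  induction M with
  | var x =>
    intro σ h
    rcases h x (by simp [Lam.fv]) with ⟨c, hc, hcon⟩
    simpa [transPhi, psubst, hc] using Canonical.con hcon
  | lam x N _ =>
    intro σ h
    simp only [transPhi, psubst]
    refine Canonical.con (IsConTerm.con ?_)
    intro t ht
    simp only [List.mem_map, List.mem_attach, true_and] at ht
    obtain ⟨⟨s, hs⟩, rfl⟩ := ht
    simp only [List.mem_map] at hs
    obtain ⟨z, hz, rfl⟩ := hs
    have hz' : z ∈ Lam.fv (Lam.lam x N) := by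
      simpa [Lam.fvList, Finset.mem_sort] using hz
    rcases h z hz' with ⟨c, hc, hcon⟩
    simpa [psubst, hc] using hcon
  | app M N ihM ihN =>
    intro σ h
    simp only [transPhi, psubst]
    exact Canonical.app
      (ihM σ (fun y hy => h y (by simp [Lam.fv, hy])))
      (ihN σ (fun y hy => h y (by simp [Lam.fv, hy])))

open PTerm in
lemma step_canonical : ∀ {t u : PTerm}, PhiStep t u → Canonical t → Canonical u := by
  intro t u h
  induction h with
  | @root x M ts v hts hv hlen =>
    intro _
    apply psubst_canonical
    intro y hy
    have hmem : y ∈ Lam.fvList (Lam.lam x M) ++ [x] := by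
      by_cases hxy : y = x
      · simp [hxy]
      · have : y ∈ Lam.fv (Lam.lam x M) := by
          simp [Lam.fv, Finset.mem_sdiff, hy, hxy]
        simp [Lam.fvList, Finset.mem_sort, this]
    have hlen' : (Lam.fvList (Lam.lam x M) ++ [x]).length = (ts ++ [v]).length := by
      simp [hlen]
    rcases lookup_zip hlen' hmem with ⟨c, hc, hl⟩
    refine ⟨c, hl, ?_⟩
    rcases List.mem_append.1 hc with h' | h'
    · exact hts _ h'
    · simpa using (by simpa using h' : c = v) ▸ hv
  | appL _ ih =>
    intro hcan
    cases hcan with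
    | con hc => cases hc
    | app hu hv => exact Canonical.app (ih hu) hv
  | appR _ ih =>
    intro hcan
    cases hcan with
    | con hc => cases hc
    | app hu hv => exact Canonical.app hu (ih hv)
  | @conArg x M ts₁ s s' ts₂ hstep ih =>
    intro hcan
    cases hcan with
    | con hc =>
      cases hc with
      | con h => exact absurd (h s (by simp)) (fun hcs => isConTerm_no_step hstep hcs)

/-- For every closed λ-term M, ⟨M⟩ is canonical; moreover canonicity of closed
Φ-terms is preserved by one-step Φ-rewriting. -/
theorem canonicity :
    (∀ M : Lam, Lam.Closed M → PTerm.Canonical (transPhi M)) ∧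
    (∀ t u : PTerm, PTerm.ClosedP t → PTerm.Canonical t → PhiStep t u →
      PTerm.Canonical u) := by
  constructor
  · intro M hM
    induction M with
    | var x => simp [Lam.Closed, Lam.fv] at hM
    | lam x N _ =>
      have hM' : Lam.fv (Lam.lam x N) = ∅ := hM
      have hfl : Lam.fvList (Lam.lam x N) = [] := by
        simp [Lam.fvList, hM']
      simp only [transPhi, hfl, List.map_nil]
      exact PTerm.Canonical.con (PTerm.IsConTerm.con (by simp))
    | app M N ihM ihN =>
      rw [Lam.Closed, Lam.fv, Finset.union_eq_empty] at hM
      exact PTerm.Canonical.app (ihM hM.1) (ihN hM.2)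
  · intro t u _ hcan hstep
    exact step_canonical hstep hcan
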